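/- Let T be a measure-preserving transformation of a probability space, (s_{n,i})_{(r_n)} a dynamical sequence of integers, and B a measurable set. If for every sequence of measurable sets (A_n), (1/r_n)∑_{i<r_n} |μ(T^{s_{n,i}}(A_n) ∩ B) − μ(A_n)μ(B)| → 0, then ∫ |(1/r_n)∑_{i<r_n} χ_B∘T^{-s_{n,i}} − μ(B)| dμ → 0. (Proof idea: take A_n⁺ and A_n⁻ to be the sets where the Cesàro average minus μ(B) is nonnegative, respectively negative.) -/

import Mathlib

/-!
Put `Y_n = (1/r_n) ∑_i χ_B ∘ T^{-s_{n,i}}`, whose mean is `μ(B)`. By Cauchy–Schwarz the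
`L¹`-distance from `Y_n` to `μ(B)` is at most the standard deviation of `Y_n`, and by invariance
of `μ`,
`Var Y_n = (1/r_n²) ∑_{i,j} (μ(T^{s_{n,i}} T^{-s_{n,j}} B ∩ B) − μ(T^{-s_{n,j}} B) μ(B))`.
This double average is at most the inner average for the worst index `j_n`, which is exactly the
hypothesis applied to `A_n = T^{-s_{n,j_n}} B`.
(The sets `{Y_n ≥ μ(B)}`, `{Y_n < μ(B)}` would need the hypothesis with `T^{-s}` in place of
`T^{s}`; the variance bound is insensitive to that sign.)
-/

open MeasureTheory Filter Finset

/-- Integer iterate of an invertible transformation. -/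
noncomputable def iterZ {X : Type*} [MeasurableSpace X] (T : X ≃ᵐ X) (k : ℤ) : X → X :=
  if 0 ≤ k then (⇑T)^[k.toNat] else (⇑T.symm)^[(-k).toNat]

open ProbabilityTheory

section Probability

variable {Ω : Type*} [MeasurableSpace Ω] {μ : Measure Ω}

theorem integral_abs_sub_integral_le_sqrt_variance [IsProbabilityMeasure μ] {Y : Ω → ℝ}
    (hY : MemLp Y 2 μ) : ∫ ω, |Y ω - μ[Y]| ∂μ ≤ √Var[Y; μ] := by
  have hdev : MemLp (fun ω => |Y ω - μ[Y]|) 2 μ := (hY.sub (memLp_const _)).abs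
  have hsq : μ[(fun ω => |Y ω - μ[Y]|) ^ 2] = Var[Y; μ] := by
    simp only [variance_eq_integral hY.aemeasurable, Pi.pow_apply, sq_abs]
  have hvar := variance_nonneg (fun ω => |Y ω - μ[Y]|) μ
  rw [variance_eq_sub hdev, hsq] at hvar
  exact (le_abs_self _).trans (Real.abs_le_sqrt (by linarith))

theorem memLp_indicator_one [IsFiniteMeasure μ] {S : Set Ω} (hS : MeasurableSet S)
    (p : ENNReal) : MemLp (S.indicator (1 : Ω → ℝ)) p μ :=
  memLp_indicator_const p hS 1 (Or.inr (measure_ne_top _ _))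

theorem covariance_indicator_one [IsProbabilityMeasure μ] {S S' : Set Ω} (hS : MeasurableSet S)
    (hS' : MeasurableSet S') :
    cov[S.indicator 1, S'.indicator 1; μ] = μ.real (S ∩ S') - μ.real S * μ.real S' := by
  rw [covariance_eq_sub (memLp_indicator_one hS 2) (memLp_indicator_one hS' 2),
    ← Set.inter_indicator_one, integral_indicator_one hS, integral_indicator_one hS',
    integral_indicator_one (hS.inter hS')]

end Probability

theorem exists_double_average_le_average_abs (a : ℕ → ℕ → ℝ) (r : ℕ) :
    ∃ j, (1 / (r : ℝ)) ^ 2 * ∑ i ∈ range r, ∑ j ∈ range r, a i j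
      ≤ 1 / (r : ℝ) * ∑ i ∈ range r, |a i j| := by
  rcases r.eq_zero_or_pos with rfl | hr
  · exact ⟨0, by simp⟩
  set b : ℕ → ℝ := fun j => 1 / (r : ℝ) * ∑ i ∈ range r, |a i j|
  have hle : (1 / (r : ℝ)) ^ 2 * ∑ i ∈ range r, ∑ j ∈ range r, a i j
      ≤ 1 / (r : ℝ) * ∑ j ∈ range r, b j := by
    rw [← mul_sum, ← mul_assoc, ← sq, sum_comm]
    gcongr with j _ i _
    exact le_abs_self _
  obtain ⟨j, -, hj⟩ := exists_le_of_sum_le (nonempty_range_iff.2 hr.ne')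
    (f := fun _ => 1 / (r : ℝ) * ∑ j ∈ range r, b j) (g := b) (by
      rw [sum_const, card_range, nsmul_eq_mul]
      field_simp
      rfl)
  exact ⟨j, hle.trans hj⟩

section Dynamics

variable {X : Type*}

theorem Equiv.Perm.image_zpow_eq_preimage (P : Equiv.Perm X) (k : ℤ) (A : Set X) :
    ⇑(P ^ k) '' A = ⇑(P ^ (-k)) ⁻¹' A := by
  rw [Equiv.image_eq_preimage_symm, ← Equiv.Perm.inv_def, ← zpow_neg]

theorem Set.indicator_one_apply_zpow_neg {M : Type*} [Zero M] [One M] (P : Equiv.Perm X)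
    (k : ℤ) (B : Set X) (x : X) :
    B.indicator (1 : X → M) (⇑(P ^ (-k)) x) = (⇑(P ^ k) '' B).indicator 1 x := by
  rw [Equiv.Perm.image_zpow_eq_preimage]
  rfl

variable [MeasurableSpace X] {μ : Measure X}

theorem iterZ_eq_zpow (T : X ≃ᵐ X) (k : ℤ) : iterZ T k = ⇑(T.toEquiv ^ k) := by
  unfold iterZ
  rcases le_or_gt 0 k with hk | hk
  · rw [if_pos hk, ← Int.toNat_of_nonneg hk, zpow_natCast, Equiv.Perm.coe_pow]
    rfl
  · rw [if_neg hk.not_ge]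
    conv_rhs => rw [show k = -((-k).toNat : ℤ) by omega]
    rw [zpow_neg, zpow_natCast, ← inv_pow, Equiv.Perm.coe_pow]
    rfl

theorem MeasureTheory.MeasurePreserving.toEquiv_zpow {T : X ≃ᵐ X}
    (hT : MeasurePreserving T μ μ) (k : ℤ) : MeasurePreserving ⇑(T.toEquiv ^ k) μ μ := by
  rw [← iterZ_eq_zpow, iterZ]
  split_ifs
  · exact hT.iterate _
  · exact hT.symm.iterate _

variable {P : Equiv.Perm X}

theorem measurableSet_zpow_image (hP : ∀ k : ℤ, MeasurePreserving ⇑(P ^ k) μ μ) {A : Set X}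
    (hA : MeasurableSet A) (k : ℤ) : MeasurableSet (⇑(P ^ k) '' A) := by
  rw [Equiv.Perm.image_zpow_eq_preimage]
  exact (hP _).measurable hA

theorem measure_zpow_image (hP : ∀ k : ℤ, MeasurePreserving ⇑(P ^ k) μ μ) {A : Set X}
    (hA : MeasurableSet A) (k : ℤ) : μ (⇑(P ^ k) '' A) = μ A := by
  rw [Equiv.Perm.image_zpow_eq_preimage]
  exact (hP _).measure_preimage hA.nullMeasurableSet

theorem measure_zpow_image_inter_zpow_image (hP : ∀ k : ℤ, MeasurePreserving ⇑(P ^ k) μ μ)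
    {B : Set X} (hB : MeasurableSet B) (a b : ℤ) :
    μ (⇑(P ^ a) '' B ∩ ⇑(P ^ b) '' B) = μ (⇑(P ^ a) '' (⇑(P ^ (-b)) '' B) ∩ B) := by
  rw [← measure_zpow_image hP
    ((measurableSet_zpow_image hP (measurableSet_zpow_image hP hB _) _).inter hB) b,
    Set.image_inter (P ^ b).injective, Set.image_image, Set.image_image]
  congr 2
  ext x
  simp only [← Equiv.Perm.mul_apply, ← zpow_add]
  rw [show b + (a + -b) = a by ring]

theorem covariance_indicator_zpow_image [IsProbabilityMeasure μ]
    (hP : ∀ k : ℤ, MeasurePreserving ⇑(P ^ k) μ μ) {B : Set X} (hB : MeasurableSet B) (a b : ℤ) :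
    cov[(⇑(P ^ a) '' B).indicator 1, (⇑(P ^ b) '' B).indicator 1; μ]
      = μ.real (⇑(P ^ a) '' (⇑(P ^ (-b)) '' B) ∩ B)
        - μ.real (⇑(P ^ (-b)) '' B) * μ.real B := by
  rw [covariance_indicator_one (measurableSet_zpow_image hP hB a)
    (measurableSet_zpow_image hP hB b)]
  simp only [measureReal_def, measure_zpow_image_inter_zpow_image hP hB,
    measure_zpow_image hP hB]

theorem integral_abs_average_indicator_zpow_sub_le [IsProbabilityMeasure μ]
    (hP : ∀ k : ℤ, MeasurePreserving ⇑(P ^ k) μ μ) {B : Set X} (hB : MeasurableSet B)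
    (s : ℕ → ℤ) {r : ℕ} (hr : 0 < r) :
    ∫ x, |1 / (r : ℝ) * ∑ i ∈ range r, B.indicator 1 (⇑(P ^ (-s i)) x) - μ.real B| ∂μ
      ≤ √((1 / (r : ℝ)) ^ 2 * ∑ i ∈ range r, ∑ j ∈ range r,
          (μ.real (⇑(P ^ s i) '' (⇑(P ^ (-s j)) '' B) ∩ B)
            - μ.real (⇑(P ^ (-s j)) '' B) * μ.real B)) := by
  set Y : X → ℝ := fun x => 1 / (r : ℝ) * ∑ i ∈ range r, (⇑(P ^ s i) '' B).indicator 1 x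
  have hmem : ∀ i, MemLp ((⇑(P ^ s i) '' B).indicator (1 : X → ℝ)) 2 μ :=
    fun i => memLp_indicator_one (measurableSet_zpow_image hP hB _) 2
  have hmean : μ[Y] = μ.real B := by
    simp only [Y, integral_const_mul,
      integral_finsetSum _ fun i _ => (hmem i).integrable one_le_two,
      integral_indicator_one (measurableSet_zpow_image hP hB _), measureReal_def,
      measure_zpow_image hP hB, sum_const, card_range, nsmul_eq_mul]
    field_simp
  calc ∫ x, |1 / (r : ℝ) * ∑ i ∈ range r, B.indicator 1 (⇑(P ^ (-s i)) x) - μ.real B| ∂μ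
      = ∫ x, |Y x - μ[Y]| ∂μ := by
        simp only [hmean, Y, Set.indicator_one_apply_zpow_neg]
    _ ≤ √Var[Y; μ] := integral_abs_sub_integral_le_sqrt_variance
        ((memLp_finsetSum _ fun i _ => hmem i).const_mul _)
    _ = _ := by
        rw [variance_const_mul, variance_fun_sum' fun i _ => hmem i]
        simp only [covariance_indicator_zpow_image hP hB]

end Dynamics

/-- If, for a fixed measurable set `B`, the dynamical sequence averages
`(1/r_n)∑_i |μ(T^{s_{n,i}}A_n ∩ B) − μ(A_n)μ(B)|` tend to zero for every sequence of
measurable sets `(A_n)`, then the L¹ dynamical Cesàro averages of `χ_B` converge to `μ(B)`. -/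
theorem weak_mixing_on_B_imp_L1_ergodic_on_B
    {X : Type*} [MeasurableSpace X] (μ : Measure X) [IsProbabilityMeasure μ]
    (T : X ≃ᵐ X) (hT : MeasurePreserving T μ μ)
    (r : ℕ → ℕ) (hrtop : Tendsto r atTop atTop)
    (s : ℕ → ℕ → ℤ)
    (B : Set X) (hB : MeasurableSet B)
    (hwm : ∀ A : ℕ → Set X, (∀ n, MeasurableSet (A n)) →
      Tendsto (fun n : ℕ =>
          (1 / (r n : ℝ)) * ∑ i ∈ Finset.range (r n),
            |(μ (iterZ T (s n i) '' A n ∩ B)).toReal - (μ (A n)).toReal * (μ B).toReal|)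
        atTop (nhds 0)) :
    Tendsto (fun n : ℕ =>
        ∫ x, |(1 / (r n : ℝ)) * ∑ i ∈ Finset.range (r n),
            B.indicator (fun _ => (1 : ℝ)) (iterZ T (-(s n i)) x) - (μ B).toReal| ∂μ)
      atTop (nhds 0) := by
  have hP := hT.toEquiv_zpow
  choose j hj using fun n => exists_double_average_le_average_abs (fun i j =>
    μ.real (⇑(T.toEquiv ^ s n i) '' (⇑(T.toEquiv ^ (-s n j)) '' B) ∩ B)
      - μ.real (⇑(T.toEquiv ^ (-s n j)) '' B) * μ.real B) (r n)
  have hworst := hwm (fun n => iterZ T (-s n (j n)) '' B) fun n => by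
    rw [iterZ_eq_zpow]
    exact measurableSet_zpow_image hP hB _
  simp only [iterZ_eq_zpow, ← measureReal_def] at hworst ⊢
  refine squeeze_zero' (Eventually.of_forall fun n => integral_nonneg fun _ => abs_nonneg _) ?_
    (by simpa only [Real.sqrt_zero] using hworst.sqrt)
  filter_upwards [hrtop.eventually_ge_atTop 1] with n hn
  exact (integral_abs_average_indicator_zpow_sub_le hP hB (s n) hn).trans
    (Real.sqrt_le_sqrt (hj n))
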